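/- Let ζ = exp(2πi/3) ∈ ℂ, and for l ∈ {0,1,2} define F_l : ℝ² → ℂ by F_l(x,y) = cosh(√3·x) + ζ^{−l}·exp(i·√3·y) + ζ^{l}·exp(−i·√3·y). If c₀, c₁, c₂ ∈ ℂ satisfy c₀·F₀(x,y) + c₁·F₁(x,y) + c₂·F₂(x,y) = 0 for all (x,y) ∈ ℝ², then c₀ = c₁ = c₂ = 0; i.e., the three functions F₀, F₁, F₂ are linearly independent over ℂ. -/
import Mathlib


open Complex

/-- The function `F_l(x,y) = cosh(√3·x) + ζ^{−l}·exp(i√3·y) + ζ^{l}·exp(−i√3·y)`, where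
`ζ = exp(2πi/3)`. -/
noncomputable def Ffun (l : ℤ) (x y : ℝ) : ℂ :=
  Complex.cosh ((Real.sqrt 3 * x : ℝ) : ℂ)
    + Complex.exp (2 * (Real.pi : ℂ) * Complex.I / 3) ^ (-l) *
        Complex.exp (Complex.I * ((Real.sqrt 3 * y : ℝ) : ℂ))
    + Complex.exp (2 * (Real.pi : ℂ) * Complex.I / 3) ^ l *
        Complex.exp (-(Complex.I * ((Real.sqrt 3 * y : ℝ) : ℂ)))

noncomputable def zeta : ℂ := Complex.exp (2 * (Real.pi : ℂ) * Complex.I / 3)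

lemma zeta_ne_zero : zeta ≠ 0 := Complex.exp_ne_zero _

lemma zeta_cube : zeta ^ 3 = 1 := by
  rw [zeta, ← Complex.exp_nat_mul]
  have : ((3 : ℕ) : ℂ) * (2 * (Real.pi : ℂ) * Complex.I / 3) = 2 * Real.pi * Complex.I := by
    push_cast; ring
  rw [this, Complex.exp_two_pi_mul_I]

lemma zeta_ne_one : zeta ≠ 1 := by
  rw [zeta]
  intro hz
  rw [Complex.exp_eq_one_iff] at hz
  obtain ⟨n, hn⟩ := hz
  have key : ((3 * n - 1 : ℤ) : ℂ) * (2 * (Real.pi : ℂ) * Complex.I) = 0 := by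
    push_cast
    linear_combination -(3 : ℂ) * hn
  have h2 : (2 * (Real.pi : ℂ) * Complex.I) ≠ 0 := by
    simp [Real.pi_ne_zero, Complex.I_ne_zero]
  have : ((3 * n - 1 : ℤ) : ℂ) = 0 := by
    exact (mul_eq_zero.mp key).resolve_right h2
  have : (3 * n - 1 : ℤ) = 0 := by exact_mod_cast this
  omega

lemma zeta_sum : 1 + zeta + zeta ^ 2 = 0 := by
  have h : (zeta - 1) * (1 + zeta + zeta ^ 2) = 0 := by
    have := zeta_cube
    ring_nf
    linear_combination zeta_cube
  rcases mul_eq_zero.mp h with h1 | h2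
  · exact absurd (sub_eq_zero.mp h1) zeta_ne_one
  · exact h2

/-- The three functions `F₀, F₁, F₂` are linearly independent over `ℂ`:
if `c₀·F₀ + c₁·F₁ + c₂·F₂ = 0` identically on `ℝ²`, then `c₀ = c₁ = c₂ = 0`. -/
theorem stmt10 (c₀ c₁ c₂ : ℂ)
    (h : ∀ x y : ℝ, c₀ * Ffun 0 x y + c₁ * Ffun 1 x y + c₂ * Ffun 2 x y = 0) :
    c₀ = 0 ∧ c₁ = 0 ∧ c₂ = 0 := by
  have hz2 : zeta * zeta ^ 2 = 1 := by linear_combination zeta_cube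
  have hzinv : zeta⁻¹ = zeta ^ 2 := inv_eq_of_mul_eq_one_right hz2
  have hz2inv : (zeta ^ 2)⁻¹ = zeta := inv_eq_of_mul_eq_one_right (by linear_combination zeta_cube)
  have F00 : ∀ l : ℤ, Ffun l 0 0 = 1 + zeta ^ (-l) + zeta ^ l := by
    intro l
    simp [Ffun, zeta]
  set y₁ : ℝ := 2 * Real.pi / (3 * Real.sqrt 3) with hy1def
  set y₂ : ℝ := 4 * Real.pi / (3 * Real.sqrt 3) with hy2def
  have h3 : Real.sqrt 3 ≠ 0 := by positivity
  have hy₁ : Real.sqrt 3 * y₁ = 2 * Real.pi / 3 := by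
    rw [hy1def]; field_simp
  have hy₂ : Real.sqrt 3 * y₂ = 4 * Real.pi / 3 := by
    rw [hy2def]; field_simp
  have ha1 : Complex.exp (Complex.I * ((Real.sqrt 3 * y₁ : ℝ) : ℂ)) = zeta := by
    rw [hy₁, zeta]; congr 1; push_cast; ring
  have ha1' : Complex.exp (-(Complex.I * ((Real.sqrt 3 * y₁ : ℝ) : ℂ))) = zeta ^ 2 := by
    rw [Complex.exp_neg, ha1, hzinv]
  have ha2 : Complex.exp (Complex.I * ((Real.sqrt 3 * y₂ : ℝ) : ℂ)) = zeta ^ 2 := by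
    rw [hy₂, zeta, ← Complex.exp_nat_mul]; congr 1; push_cast; ring
  have ha2' : Complex.exp (-(Complex.I * ((Real.sqrt 3 * y₂ : ℝ) : ℂ))) = zeta := by
    rw [Complex.exp_neg, ha2, hz2inv]
  have F01 : ∀ l : ℤ, Ffun l 0 y₁ = 1 + zeta ^ (-l) * zeta + zeta ^ l * zeta ^ 2 := by
    intro l
    simp only [Ffun, mul_zero, Complex.ofReal_zero, Complex.cosh_zero, ha1, ha1']
    rw [zeta]
  have F02 : ∀ l : ℤ, Ffun l 0 y₂ = 1 + zeta ^ (-l) * zeta ^ 2 + zeta ^ l * zeta := by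
    intro l
    simp only [Ffun, mul_zero, Complex.ofReal_zero, Complex.cosh_zero, ha2, ha2']
    rw [zeta]
  have e1 := h 0 0
  have e2 := h 0 y₁
  have e3 := h 0 y₂
  rw [F00 0, F00 1, F00 2] at e1
  rw [F01 0, F01 1, F01 2] at e2
  rw [F02 0, F02 1, F02 2] at e3
  simp only [neg_zero, zpow_zero, zpow_one, zpow_neg, hzinv, hz2inv,
    show ((2:ℤ) = ((2:ℕ):ℤ)) from rfl, zpow_natCast] at e1 e2 e3
  refine ⟨?_, ?_, ?_⟩
  · linear_combination (e1 - (c₁ + c₂) * zeta_sum) / 3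
  · linear_combination (e2 - c₀ * zeta_sum - c₂ * zeta_sum - (2 * c₁ + c₂ * zeta) * zeta_cube) / 3
  · linear_combination (e3 - c₀ * zeta_sum - c₁ * zeta_sum - (c₁ * zeta + 2 * c₂) * zeta_cube) / 3
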